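/- arXiv:1802.08454 — 6 statements merged into one kernel-verified Lean document; each statement's English description precedes it below -/
import Mathlib

section
/- Faithfulness of the embedding (Theorem 1): A CJ formula φ is valid in every CJ model (i.e., M,s ⊨ φ for every CJ model M and every world s of M) if and only if for every nonempty type i of worlds, every pair of relations av, pv : i → i → Prop, every ob : (i → Prop) → (i → Prop) → Prop, and every interpretation of the propositional symbols as predicates on i, if av, pv, ob satisfy the axioms AV, PV1, PV2, OB1, OB2, OB3, OB4, OB5, then vld ⌊φ⌋ holds, where vld A := ∀ s : i, A s. -/
/-- Formulas of the Carmo–Jones dyadic deontic logic. -/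
inductive CJForm : Type where
  | atom : ℕ → CJForm
  | neg  : CJForm → CJForm
  | disj : CJForm → CJForm → CJForm
  | box  : CJForm → CJForm
  | boxa : CJForm → CJForm
  | boxp : CJForm → CJForm
  /-- `cond φ ψ` represents ○(ψ/φ): "it ought to be ψ, given φ". -/
  | cond : CJForm → CJForm → CJForm
  | oblA : CJForm → CJForm
  | oblP : CJForm → CJForm

/-- A Carmo–Jones model over a (nonempty) type `S` of worlds. -/
structure CJModel (S : Type) where
  ne : Nonempty S
  av : S → Set S
  pv : S → Set S
  ob : Set S → Set (Set S)
  V  : ℕ → Set S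
  av_nonempty : ∀ s, (av s).Nonempty
  av_sub_pv : ∀ s, av s ⊆ pv s
  pv_refl : ∀ s, s ∈ pv s
  ob1 : ∀ X : Set S, ∅ ∉ ob X
  ob2 : ∀ X Y Z : Set S, Y ∩ X = Z ∩ X → (Y ∈ ob X ↔ Z ∈ ob X)
  ob3 : ∀ (β : Set (Set S)) (X : Set S), β ⊆ ob X → β.Nonempty →
        (⋂₀ β ∩ X).Nonempty → ⋂₀ β ∈ ob X
  ob4 : ∀ X Y Z : Set S, Y ⊆ X → Y ∈ ob X → X ⊆ Z → (Z \ X) ∪ Y ∈ ob Z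
  ob5 : ∀ X Y Z : Set S, Y ⊆ X → Z ∈ ob X → (Y ∩ Z).Nonempty → Z ∈ ob Y

/-- Satisfaction `M,s ⊨ δ` in a CJ model. -/
def CJModel.sat {S : Type} (M : CJModel S) : CJForm → S → Prop
  | .atom n, s => s ∈ M.V n
  | .neg φ, s => ¬ M.sat φ s
  | .disj φ ψ, s => M.sat φ s ∨ M.sat ψ s
  | .box φ, _ => {t | M.sat φ t} = (Set.univ : Set S)
  | .boxa φ, s => M.av s ⊆ {t | M.sat φ t}
  | .boxp φ, s => M.pv s ⊆ {t | M.sat φ t}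
  | .cond φ ψ, _ => {t | M.sat ψ t} ∈ M.ob {t | M.sat φ t}
  | .oblA φ, s => {t | M.sat φ t} ∈ M.ob (M.av s) ∧ (M.av s ∩ {t | ¬ M.sat φ t}).Nonempty
  | .oblP φ, s => {t | M.sat φ t} ∈ M.ob (M.pv s) ∧ (M.pv s ∩ {t | ¬ M.sat φ t}).Nonempty

/-- The shallow semantical embedding ⌊·⌋ of CJ formulas as predicates on a type
`i` of worlds, relative to `av`, `pv`, `ob` and an interpretation `val` of the
propositional symbols. -/
def emb {i : Type} (av pv : i → i → Prop) (ob : (i → Prop) → (i → Prop) → Prop)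
    (val : ℕ → i → Prop) : CJForm → i → Prop
  | .atom n => val n
  | .neg φ => fun x => ¬ emb av pv ob val φ x
  | .disj φ ψ => fun x => emb av pv ob val φ x ∨ emb av pv ob val ψ x
  | .box φ => fun _ => ∀ y, emb av pv ob val φ y
  | .boxa φ => fun x => ∀ y, av x y → emb av pv ob val φ y
  | .boxp φ => fun x => ∀ y, pv x y → emb av pv ob val φ y
  | .cond φ ψ => fun _ => ob (emb av pv ob val φ) (emb av pv ob val ψ)
  | .oblA φ => fun x => ob (av x) (emb av pv ob val φ) ∧ ∃ y, av x y ∧ ¬ emb av pv ob val φ y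
  | .oblP φ => fun x => ob (pv x) (emb av pv ob val φ) ∧ ∃ y, pv x y ∧ ¬ emb av pv ob val φ y

/-- The axioms AV, PV1, PV2, OB1–OB5 on the embedding's parameters. -/
def CJAxioms {i : Type} (av pv : i → i → Prop)
    (ob : (i → Prop) → (i → Prop) → Prop) : Prop :=
  (∀ w, ∃ v, av w v) ∧                                       -- AV
  (∀ w v, av w v → pv w v) ∧                                 -- PV1
  (∀ w, pv w w) ∧                                            -- PV2
  (∀ X : i → Prop, ¬ ob X (fun _ => False)) ∧                -- OB1
  (∀ X Y Z : i → Prop,                                       -- OB2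
    (∀ w, (Y w ∧ X w) ↔ (Z w ∧ X w)) → (ob X Y ↔ ob X Z)) ∧
  (∀ (β : (i → Prop) → Prop) (X : i → Prop),                 -- OB3
    ((∀ Z, β Z → ob X Z) ∧ (∃ Z, β Z)) →
    ((∃ y, (∀ Z, β Z → Z y) ∧ X y) → ob X (fun w => ∀ Z, β Z → Z w))) ∧
  (∀ X Y Z : i → Prop,                                       -- OB4
    ((∀ w, Y w → X w) ∧ ob X Y ∧ (∀ w, X w → Z w)) →
    ob Z (fun w => (Z w ∧ ¬ X w) ∨ Y w)) ∧
  (∀ X Y Z : i → Prop,                                       -- OB5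
    ((∀ w, Y w → X w) ∧ ob X Z ∧ (∃ w, Y w ∧ Z w)) → ob Y Z)

/-- The accessibility relation of a CJ model, as a binary predicate. -/
def CJModel.avR {S : Type} (M : CJModel S) : S → S → Prop := fun w v => v ∈ M.av w

def CJModel.pvR {S : Type} (M : CJModel S) : S → S → Prop := fun w v => v ∈ M.pv w

/-- The `ob` function of a CJ model, acting on predicates. -/
def CJModel.obR {S : Type} (M : CJModel S) : (S → Prop) → (S → Prop) → Prop :=
  fun X Y => {s | Y s} ∈ M.ob {s | X s}

def CJModel.val {S : Type} (M : CJModel S) : ℕ → S → Prop := fun n s => s ∈ M.V n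

/-- The embedding induced by a CJ model `M` over its type of worlds. -/
def CJModel.emb {S : Type} (M : CJModel S) : CJForm → S → Prop :=
  _root_.emb M.avR M.pvR M.obR M.val

/-- Validity of an embedded formula: truth at every world. -/
def vld {i : Type} (A : i → Prop) : Prop := ∀ s, A s

/-- Satisfaction coincides with the induced embedding. -/
theorem sat_iff_emb {S : Type} (M : CJModel S) : ∀ (φ : CJForm) (s : S),
    M.sat φ s ↔ M.emb φ s := by
  intro φ
  induction φ with
  | atom n => intro s; exact Iff.rfl
  | neg φ ih => intro s; exact not_congr (ih s)
  | disj φ ψ ihφ ihψ => intro s; exact or_congr (ihφ s) (ihψ s)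
  | box φ ih =>
    intro s
    show {t | M.sat φ t} = Set.univ ↔ ∀ y, M.emb φ y
    rw [Set.eq_univ_iff_forall]
    exact forall_congr' fun y => ih y
  | boxa φ ih =>
    intro s
    show M.av s ⊆ {t | M.sat φ t} ↔ ∀ y, M.avR s y → M.emb φ y
    constructor
    · intro h y hy; exact (ih y).mp (h hy)
    · intro h y hy; exact (ih y).mpr (h y hy)
  | boxp φ ih =>
    intro s
    show M.pv s ⊆ {t | M.sat φ t} ↔ ∀ y, M.pvR s y → M.emb φ y
    constructor
    · intro h y hy; exact (ih y).mp (h hy)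
    · intro h y hy; exact (ih y).mpr (h y hy)
  | cond φ ψ ihφ ihψ =>
    intro s
    have e1 : {t | M.sat φ t} = {t | M.emb φ t} := Set.ext ihφ
    have e2 : {t | M.sat ψ t} = {t | M.emb ψ t} := Set.ext ihψ
    show {t | M.sat ψ t} ∈ M.ob {t | M.sat φ t} ↔
      {t | M.emb ψ t} ∈ M.ob {t | M.emb φ t}
    rw [e1, e2]
  | oblA φ ih =>
    intro s
    have e1 : {t | M.sat φ t} = {t | M.emb φ t} := Set.ext ih
    show {t | M.sat φ t} ∈ M.ob (M.av s) ∧ (M.av s ∩ {t | ¬ M.sat φ t}).Nonempty ↔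
      ({t | M.emb φ t} ∈ M.ob {t | M.avR s t} ∧ ∃ y, M.avR s y ∧ ¬ M.emb φ y)
    rw [e1]
    have e0 : ({t | M.avR s t} : Set S) = M.av s := rfl
    rw [e0]
    refine and_congr Iff.rfl ?_
    constructor
    · rintro ⟨y, hy, hn⟩; exact ⟨y, hy, fun h => hn ((ih y).mpr h)⟩
    · rintro ⟨y, hy, hn⟩; exact ⟨y, hy, fun h => hn ((ih y).mp h)⟩
  | oblP φ ih =>
    intro s
    have e1 : {t | M.sat φ t} = {t | M.emb φ t} := Set.ext ih
    show {t | M.sat φ t} ∈ M.ob (M.pv s) ∧ (M.pv s ∩ {t | ¬ M.sat φ t}).Nonempty ↔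
      ({t | M.emb φ t} ∈ M.ob {t | M.pvR s t} ∧ ∃ y, M.pvR s y ∧ ¬ M.emb φ y)
    rw [e1]
    have e0 : ({t | M.pvR s t} : Set S) = M.pv s := rfl
    rw [e0]
    refine and_congr Iff.rfl ?_
    constructor
    · rintro ⟨y, hy, hn⟩; exact ⟨y, hy, fun h => hn ((ih y).mpr h)⟩
    · rintro ⟨y, hy, hn⟩; exact ⟨y, hy, fun h => hn ((ih y).mp h)⟩

/-- Every CJ model satisfies the axioms. -/
theorem model_axioms {S : Type} (M : CJModel S) : CJAxioms M.avR M.pvR M.obR := by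
  refine ⟨?_, ?_, ?_, ?_, ?_, ?_, ?_, ?_⟩
  · intro w; exact M.av_nonempty w
  · intro w v h; exact M.av_sub_pv w h
  · intro w; exact M.pv_refl w
  · intro X h
    have h' : ({s | False} : Set S) ∈ M.ob {s | X s} := h
    rw [Set.setOf_false] at h'
    exact M.ob1 _ h'
  · intro X Y Z hw
    exact M.ob2 {s | X s} {s | Y s} {s | Z s}
      (Set.ext fun w => by simpa [Set.mem_inter_iff] using hw w)
  · rintro β X ⟨h1, Z0, hZ0⟩ ⟨y, hy, hXy⟩
    set B : Set (Set S) := {A | ∃ Z, β Z ∧ A = {s | Z s}} with hB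
    have hsub : B ⊆ M.ob {s | X s} := by
      rintro A ⟨Z, hZ, rfl⟩; exact h1 Z hZ
    have hBne : B.Nonempty := ⟨{s | Z0 s}, Z0, hZ0, rfl⟩
    have hint : (⋂₀ B ∩ {s | X s}).Nonempty := by
      refine ⟨y, ?_, hXy⟩
      rintro A ⟨Z, hZ, rfl⟩
      exact hy Z hZ
    have := M.ob3 B {s | X s} hsub hBne hint
    have e : ⋂₀ B = {w | ∀ Z, β Z → Z w} := by
      ext w
      constructor
      · intro h Z hZ; exact h {s | Z s} ⟨Z, hZ, rfl⟩
      · rintro h A ⟨Z, hZ, rfl⟩; exact h Z hZ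
    rw [e] at this
    exact this
  · rintro X Y Z ⟨h1, h2, h3⟩
    have := M.ob4 {s | X s} {s | Y s} {s | Z s} h1 h2 h3
    have e : ({s | Z s} \ {s | X s}) ∪ {s | Y s} = {w | (Z w ∧ ¬ X w) ∨ Y w} := by
      ext w; simp [Set.mem_diff]
    rw [e] at this
    exact this
  · rintro X Y Z ⟨h1, h2, ⟨w, hw1, hw2⟩⟩
    exact M.ob5 {s | X s} {s | Y s} {s | Z s} h1 h2 ⟨w, hw1, hw2⟩

/-- Construct a CJ model from data satisfying the axioms. -/
def mkModel {i : Type} (hne : Nonempty i) (av pv : i → i → Prop)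
    (ob : (i → Prop) → (i → Prop) → Prop) (val : ℕ → i → Prop)
    (hax : CJAxioms av pv ob) : CJModel i where
  ne := hne
  av := fun w => {v | av w v}
  pv := fun w => {v | pv w v}
  ob := fun X => {Y | ob (fun s => s ∈ X) (fun s => s ∈ Y)}
  V := fun n => {s | val n s}
  av_nonempty := fun s => hax.1 s
  av_sub_pv := fun s v h => hax.2.1 s v h
  pv_refl := fun s => hax.2.2.1 s
  ob1 := by
    intro X h
    have h' : ob (fun s => s ∈ X) (fun s => s ∈ (∅ : Set i)) := h
    have e : (fun s => s ∈ (∅ : Set i)) = (fun _ : i => False) := rfl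
    rw [e] at h'
    exact hax.2.2.2.1 _ h'
  ob2 := by
    intro X Y Z hYZ
    refine hax.2.2.2.2.1 (fun s => s ∈ X) (fun s => s ∈ Y) (fun s => s ∈ Z) ?_
    intro w
    have := Set.ext_iff.mp hYZ w
    simpa [Set.mem_inter_iff] using this
  ob3 := by
    intro β X hsub hβne hint
    have h := hax.2.2.2.2.2.1 (fun Z => ∃ A ∈ β, Z = fun s => s ∈ A) (fun s => s ∈ X)
      ⟨by rintro Z ⟨A, hA, rfl⟩; exact hsub hA,
       ⟨fun s => s ∈ hβne.choose, hβne.choose, hβne.choose_spec, rfl⟩⟩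
      ⟨hint.choose, by
        rintro Z ⟨A, hA, rfl⟩; exact hint.choose_spec.1 A hA,
        hint.choose_spec.2⟩
    have e : (fun w => ∀ Z, (∃ A ∈ β, Z = fun s => s ∈ A) → Z w)
        = (fun s => s ∈ ⋂₀ β) := by
      funext w
      apply propext
      constructor
      · intro h' A hA; exact h' (fun s => s ∈ A) ⟨A, hA, rfl⟩
      · rintro h' Z ⟨A, hA, rfl⟩; exact h' A hA
    rw [e] at h
    exact h
  ob4 := by
    intro X Y Z h1 h2 h3
    have h := hax.2.2.2.2.2.2.1 (fun s => s ∈ X) (fun s => s ∈ Y) (fun s => s ∈ Z)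
      ⟨fun w hw => h1 hw, h2, fun w hw => h3 hw⟩
    have e : (fun w => (w ∈ Z ∧ ¬ w ∈ X) ∨ w ∈ Y) = (fun s => s ∈ (Z \ X) ∪ Y) := by
      funext w; apply propext; simp [Set.mem_diff]
    rw [e] at h
    exact h
  ob5 := by
    intro X Y Z h1 h2 h3
    exact hax.2.2.2.2.2.2.2 (fun s => s ∈ X) (fun s => s ∈ Y) (fun s => s ∈ Z)
      ⟨fun w hw => h1 hw, h2, ⟨h3.choose, h3.choose_spec.1, h3.choose_spec.2⟩⟩

theorem mkModel_emb {i : Type} (hne : Nonempty i) (av pv : i → i → Prop)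
    (ob : (i → Prop) → (i → Prop) → Prop) (val : ℕ → i → Prop)
    (hax : CJAxioms av pv ob) :
    (mkModel hne av pv ob val hax).emb = emb av pv ob val := rfl

/-- **Theorem 1 (Faithfulness of the embedding).** A CJ formula is valid in
every CJ model iff, for every nonempty type of worlds and every choice of
`av`, `pv`, `ob` and interpretation of the propositional symbols satisfying
the axioms AV, PV1, PV2, OB1–OB5, the embedded formula is valid. -/

theorem faithfulness (φ : CJForm) :
    (∀ (S : Type) (M : CJModel S) (s : S), M.sat φ s) ↔
    (∀ (i : Type), Nonempty i → ∀ (av pv : i → i → Prop)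
      (ob : (i → Prop) → (i → Prop) → Prop) (val : ℕ → i → Prop),
      CJAxioms av pv ob → vld (emb av pv ob val φ)) := by
  constructor
  · intro h i hne av pv ob val hax s
    have hs := h i (mkModel hne av pv ob val hax) s
    have := (sat_iff_emb (mkModel hne av pv ob val hax) φ s).mp hs
    exact this
  · intro h S M s
    exact (sat_iff_emb M φ s).mpr
      (h S M.ne M.avR M.pvR M.obR M.val (model_axioms M) s)
end

section
/- Truth lemma (Lemma 3): Let M = ⟨S, av, pv, ob, V⟩ be a CJ model and consider the induced interpretation of the embedding over the type of worlds S, where the embedding uses the relations av, pv, ob and the valuation V of M (identifying subsets of S with predicates on S). Then for every CJ formula δ and every world s ∈ S: M,s ⊨ δ if and only if ⌊δ⌋ s holds. -/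
/-- **Truth lemma (Lemma 3).** In the interpretation induced by a CJ model `M`
over its type of worlds, a formula is satisfied at a world iff its embedding
holds there. -/
theorem truth_lemma {S : Type} (M : CJModel S) (δ : CJForm) (s : S) :
    M.sat δ s ↔ M.emb δ s := by
  induction δ generalizing s with
  | atom n => exact Iff.rfl
  | neg φ ih => exact not_congr (ih s)
  | disj φ ψ ih1 ih2 => exact or_congr (ih1 s) (ih2 s)
  | box φ ih =>
    simp only [CJModel.sat, CJModel.emb, emb, Set.eq_univ_iff_forall, Set.mem_setOf_eq]
    exact forall_congr' fun t => ih t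
  | boxa φ ih =>
    simp only [CJModel.sat, CJModel.emb, emb, Set.subset_def, Set.mem_setOf_eq]
    exact forall_congr' fun t => imp_congr Iff.rfl (ih t)
  | boxp φ ih =>
    simp only [CJModel.sat, CJModel.emb, emb, Set.subset_def, Set.mem_setOf_eq]
    exact forall_congr' fun t => imp_congr Iff.rfl (ih t)
  | cond φ ψ ih1 ih2 =>
    show _ ∈ M.ob _ ↔ _ ∈ M.ob _
    have h1 : {t | M.sat φ t} = {t | M.emb φ t} := Set.ext fun t => ih1 t
    have h2 : {t | M.sat ψ t} = {t | M.emb ψ t} := Set.ext fun t => ih2 t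
    rw [h1, h2]; rfl
  | oblA φ ih =>
    have h : {t | M.sat φ t} = {t | M.emb φ t} := Set.ext fun t => ih t
    show _ ∧ _ ↔ _ ∧ _
    constructor
    · rintro ⟨h1, t, ht, ht2⟩
      exact ⟨show {t | M.emb φ t} ∈ M.ob (M.av s) from h ▸ h1, t, ht,
        fun c => ht2 ((ih t).mpr c)⟩
    · rintro ⟨h1, t, ht, ht2⟩
      exact ⟨show {t | M.sat φ t} ∈ M.ob (M.av s) from h ▸ (h1 : {t | M.emb φ t} ∈ M.ob (M.av s)), t, ht, fun c => ht2 ((ih t).mp c)⟩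
  | oblP φ ih =>
    have h : {t | M.sat φ t} = {t | M.emb φ t} := Set.ext fun t => ih t
    show _ ∧ _ ↔ _ ∧ _
    constructor
    · rintro ⟨h1, t, ht, ht2⟩
      exact ⟨show {t | M.emb φ t} ∈ M.ob (M.pv s) from h ▸ h1, t, ht,
        fun c => ht2 ((ih t).mpr c)⟩
    · rintro ⟨h1, t, ht, ht2⟩
      exact ⟨show {t | M.sat φ t} ∈ M.ob (M.pv s) from h ▸ (h1 : {t | M.emb φ t} ∈ M.ob (M.pv s)), t, ht, fun c => ht2 ((ih t).mp c)⟩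
end

section
/- Denotation lemma (Justification *** in the proof of Lemma 3): Let M = ⟨S, av, pv, ob, V⟩ be a CJ model with the induced interpretation of the embedding over S. Then for every CJ formula φ, the predicate ⌊φ⌋ denotes exactly the truth set of φ in M, i.e., for all s ∈ S, ⌊φ⌋ s holds if and only if s ∈ V(φ) = {s ∈ S | M,s ⊨ φ}; equivalently, as sets, {s ∈ S | ⌊φ⌋ s} = V(φ). -/
/-- **Denotation lemma (Justification ⁂ in Lemma 3).** In the interpretation
induced by a CJ model `M`, the predicate ⌊φ⌋ denotes exactly the truth set
`V(φ) = {s | M,s ⊨ φ}` of φ in `M`. -/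
theorem denotation_lemma {S : Type} (M : CJModel S) (φ : CJForm) :
    (∀ s : S, M.emb φ s ↔ s ∈ {t | M.sat φ t}) ∧
    {s | M.emb φ s} = {t | M.sat φ t} := by
  have h : ∀ s, M.emb φ s ↔ M.sat φ s := by
    induction φ with
    | atom n => intro s; exact Iff.rfl
    | neg φ ih => intro s; exact not_congr (ih s)
    | disj φ ψ ih1 ih2 => intro s; exact or_congr (ih1 s) (ih2 s)
    | box φ ih =>
      intro s
      show (∀ y, M.emb φ y) ↔ _
      simp only [Set.eq_univ_iff_forall, Set.mem_setOf_eq, CJModel.sat]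
      exact forall_congr' ih
    | boxa φ ih =>
      intro s
      show (∀ y, M.avR s y → M.emb φ y) ↔ _
      constructor
      · intro h t ht; exact (ih t).1 (h t ht)
      · intro h t ht; exact (ih t).2 (h ht)
    | boxp φ ih =>
      intro s
      show (∀ y, M.pvR s y → M.emb φ y) ↔ _
      constructor
      · intro h t ht; exact (ih t).1 (h t ht)
      · intro h t ht; exact (ih t).2 (h ht)
    | cond φ ψ ih1 ih2 =>
      intro s
      have e1 : {t | M.emb φ t} = {t | M.sat φ t} := Set.ext ih1
      have e2 : {t | M.emb ψ t} = {t | M.sat ψ t} := Set.ext ih2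
      show M.obR (M.emb φ) (M.emb ψ) ↔ _
      unfold CJModel.obR
      rw [show {s | M.emb φ s} = {t | M.sat φ t} from e1,
          show {s | M.emb ψ s} = {t | M.sat ψ t} from e2]
      exact Iff.rfl
    | oblA φ ih =>
      intro s
      have e : {t | M.emb φ t} = {t | M.sat φ t} := Set.ext ih
      show (M.obR (M.avR s) (M.emb φ) ∧ ∃ y, M.avR s y ∧ ¬ M.emb φ y) ↔ _
      unfold CJModel.obR CJModel.avR
      constructor
      · rintro ⟨h1, y, hy1, hy2⟩
        refine ⟨?_, y, hy1, fun c => hy2 ((ih y).2 c)⟩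
        have : {s_1 | M.emb φ s_1} = {t | M.sat φ t} := e
        rw [this] at h1
        convert h1 using 2
        rfl
      · rintro ⟨h1, y, hy1, hy2⟩
        refine ⟨?_, y, hy1, fun c => hy2 ((ih y).1 c)⟩
        have : {s_1 | M.emb φ s_1} = {t | M.sat φ t} := e
        rw [this]
        convert h1 using 2
        rfl
    | oblP φ ih =>
      intro s
      have e : {t | M.emb φ t} = {t | M.sat φ t} := Set.ext ih
      show (M.obR (M.pvR s) (M.emb φ) ∧ ∃ y, M.pvR s y ∧ ¬ M.emb φ y) ↔ _
      unfold CJModel.obR CJModel.pvR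
      constructor
      · rintro ⟨h1, y, hy1, hy2⟩
        refine ⟨?_, y, hy1, fun c => hy2 ((ih y).2 c)⟩
        have : {s_1 | M.emb φ s_1} = {t | M.sat φ t} := e
        rw [this] at h1
        convert h1 using 2
        rfl
      · rintro ⟨h1, y, hy1, hy2⟩
        refine ⟨?_, y, hy1, fun c => hy2 ((ih y).1 c)⟩
        have : {s_1 | M.emb φ s_1} = {t | M.sat φ t} := e
        rw [this]
        convert h1 using 2
        rfl
  exact ⟨h, Set.ext h⟩
end

section
/- Model extraction (Lemma 4): Let i be a nonempty type, av, pv : i → i → Prop, ob : (i → Prop) → (i → Prop) → Prop, and an interpretation of the propositional symbols as predicates on i, such that the axioms AV, PV1, PV2, OB1, OB2, OB3, OB4, OB5 all hold. Then there exists a CJ model M = ⟨S, av', pv', ob', V⟩ with S = i, av'(s) = {u | av s u}, pv'(s) = {u | pv s u}, ob'(X) = {Y | ob X Y} (identifying subsets with predicates), and V(p) = {s | s satisfies the predicate assigned to p}, such that: (i) av', pv', ob' satisfy all the CJ model conditions, and (ii) for every CJ formula δ and world s : i, ⌊δ⌋ s holds if and only if M,s ⊨ δ. -/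
/-- **Model extraction (Lemma 4).** From any interpretation of the embedding
over a nonempty type `i` satisfying the axioms AV, PV1, PV2, OB1–OB5, one can
extract a CJ model over `i` whose components are induced by `av`, `pv`, `ob`
and the valuation, and in which satisfaction coincides with the embedding. -/
theorem model_extraction (i : Type) (hne : Nonempty i)
    (av pv : i → i → Prop) (ob : (i → Prop) → (i → Prop) → Prop)
    (val : ℕ → i → Prop) (hax : CJAxioms av pv ob) :
    ∃ M : CJModel i,
      M.av = (fun s => {u | av s u}) ∧
      M.pv = (fun s => {u | pv s u}) ∧
      M.ob = (fun X => {Y : Set i | ob (fun s => s ∈ X) (fun s => s ∈ Y)}) ∧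
      M.V = (fun n => {s | val n s}) ∧
      (∀ (δ : CJForm) (s : i), emb av pv ob val δ s ↔ M.sat δ s) := by
  obtain ⟨hAV, hPV1, hPV2, hOB1, hOB2, hOB3, hOB4, hOB5⟩ := hax
  refine ⟨{ ne := hne
            av := fun s => {u | av s u}
            pv := fun s => {u | pv s u}
            ob := fun X => {Y : Set i | ob (fun s => s ∈ X) (fun s => s ∈ Y)}
            V := fun n => {s | val n s}
            av_nonempty := fun s => hAV s
            av_sub_pv := fun s u h => hPV1 s u h
            pv_refl := fun s => hPV2 s
            ob1 := fun X h => hOB1 _ h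
            ob2 := fun X Y Z h =>
              hOB2 _ _ _ (fun w => by
                have := Set.ext_iff.mp h w
                simpa [Set.mem_inter_iff] using this)
            ob3 := ?_
            ob4 := fun X Y Z h1 h2 h3 =>
              hOB4 _ _ _ ⟨fun w hw => h1 hw, h2, fun w hw => h3 hw⟩
            ob5 := fun X Y Z h1 h2 h3 => by
              obtain ⟨w, hw⟩ := h3
              exact hOB5 _ _ _ ⟨fun u hu => h1 hu, h2, ⟨w, hw.1, hw.2⟩⟩ },
        rfl, rfl, rfl, rfl, ?_⟩
  · -- ob3
    intro β X hsub hne' hne2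
    have key := hOB3 (fun Z : i → Prop => {s | Z s} ∈ β) (fun s => s ∈ X)
      ⟨fun Z hZ => hsub hZ, by
        obtain ⟨W, hW⟩ := hne'
        exact ⟨fun s => s ∈ W, by simpa [Set.setOf_mem_eq] using hW⟩⟩
      (by
        obtain ⟨y, hy⟩ := hne2
        exact ⟨y, fun Z hZ => hy.1 _ hZ, hy.2⟩)
    have := hOB2 (fun s => s ∈ X) (fun w => ∀ Z : i → Prop, {s | Z s} ∈ β → Z w)
      (fun w => w ∈ ⋂₀ β) (fun w => by
        constructor
        · rintro ⟨h1, h2⟩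
          exact ⟨fun Z hZ => h1 _ (by simpa [Set.setOf_mem_eq] using hZ), h2⟩
        · rintro ⟨h1, h2⟩
          exact ⟨fun Z hZ => h1 _ hZ, h2⟩)
    exact this.mp key
  · -- satisfaction coincides with embedding
    suffices h : ∀ δ : CJForm, ∀ s : i, emb av pv ob val δ s ↔ _ by exact h
    intro δ
    induction δ with
    | atom n => intro s; exact Iff.rfl
    | neg φ ih => intro s; simp only [emb, CJModel.sat]; exact not_congr (ih s)
    | disj φ ψ ihφ ihψ => intro s; simp only [emb, CJModel.sat]; exact or_congr (ihφ s) (ihψ s)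
    | box φ ih =>
      intro s
      simp only [emb, CJModel.sat, Set.eq_univ_iff_forall, Set.mem_setOf_eq]
      exact forall_congr' fun y => ih y
    | boxa φ ih =>
      intro s
      simp only [emb, CJModel.sat, Set.subset_def, Set.mem_setOf_eq]
      exact forall_congr' fun y => imp_congr Iff.rfl (ih y)
    | boxp φ ih =>
      intro s
      simp only [emb, CJModel.sat, Set.subset_def, Set.mem_setOf_eq]
      exact forall_congr' fun y => imp_congr Iff.rfl (ih y)
    | cond φ ψ ihφ ihψ =>
      intro s
      have eφ : emb av pv ob val φ = fun t => _ := funext fun t => propext (ihφ t)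
      have eψ : emb av pv ob val ψ = fun t => _ := funext fun t => propext (ihψ t)
      simp only [emb, CJModel.sat, eφ, eψ]
      exact Iff.rfl
    | oblA φ ih =>
      intro s
      have eφ : emb av pv ob val φ = fun t => _ := funext fun t => propext (ih t)
      simp only [emb, CJModel.sat, eφ, Set.Nonempty, Set.mem_inter_iff, Set.mem_setOf_eq]
    | oblP φ ih =>
      intro s
      have eφ : emb av pv ob val φ = fun t => _ := funext fun t => propext (ih t)
      simp only [emb, CJModel.sat, eφ, Set.Nonempty, Set.mem_inter_iff, Set.mem_setOf_eq]
end

section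
/- Faithfulness of the actual obligation case (case ○ₐφ of Lemma 3): Let M = ⟨S, av, pv, ob, V⟩ be a CJ model with the induced interpretation of the embedding over S. Then for every CJ formula φ and every world s ∈ S: ⌊○ₐφ⌋ s holds if and only if V(φ) ∈ ob(av(s)) and av(s) ∩ V(¬φ) ≠ ∅, i.e., if and only if M,s ⊨ ○ₐφ. The analogous equivalence holds for ○ₚ with pv in place of av. -/
theorem emb_eq_sat {S : Type} (M : CJModel S) (φ : CJForm) :
    ∀ s, M.emb φ s ↔ M.sat φ s := by
  induction φ with
  | atom n => intro s; rfl
  | neg φ ih =>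
      intro s
      simp only [CJModel.emb, emb, CJModel.sat] at *
      exact not_congr (ih s)
  | disj φ ψ ihφ ihψ =>
      intro s
      simp only [CJModel.emb, emb, CJModel.sat] at *
      exact or_congr (ihφ s) (ihψ s)
  | box φ ih =>
      intro s
      simp only [CJModel.emb, emb, CJModel.sat] at *
      constructor
      · intro h; ext t; simp [← ih t, h t]
      · intro h y; rw [ih y]
        have : y ∈ ({t | M.sat φ t} : Set S) := h ▸ Set.mem_univ y
        exact this
  | boxa φ ih =>
      intro s
      simp only [CJModel.emb, emb, CJModel.sat] at *
      constructor
      · intro h t ht; exact (ih t).mp (h t ht)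
      · intro h t ht; exact (ih t).mpr (h ht)
  | boxp φ ih =>
      intro s
      simp only [CJModel.emb, emb, CJModel.sat] at *
      constructor
      · intro h t ht; exact (ih t).mp (h t ht)
      · intro h t ht; exact (ih t).mpr (h ht)
  | cond φ ψ ihφ ihψ =>
      intro s
      simp only [CJModel.emb, emb, CJModel.sat, CJModel.obR] at *
      have h1 : {t | emb M.avR M.pvR M.obR M.val φ t} = {t | M.sat φ t} := by
        ext t; exact ihφ t
      have h2 : {t | emb M.avR M.pvR M.obR M.val ψ t} = {t | M.sat ψ t} := by
        ext t; exact ihψ t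
      rw [h1, h2]
  | oblA φ ih =>
      intro s
      simp only [CJModel.emb, emb, CJModel.sat, CJModel.obR, CJModel.avR] at *
      have h1 : {t | emb M.avR M.pvR M.obR M.val φ t} = {t | M.sat φ t} := by
        ext t; exact ih t
      rw [h1]
      constructor
      · rintro ⟨h, y, hy, hny⟩; exact ⟨h, y, hy, fun hs => hny ((ih y).mpr hs)⟩
      · rintro ⟨h, y, hy, hny⟩; exact ⟨h, y, hy, fun hs => hny ((ih y).mp hs)⟩
  | oblP φ ih =>
      intro s
      simp only [CJModel.emb, emb, CJModel.sat, CJModel.obR, CJModel.pvR] at *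
      have h1 : {t | emb M.avR M.pvR M.obR M.val φ t} = {t | M.sat φ t} := by
        ext t; exact ih t
      rw [h1]
      constructor
      · rintro ⟨h, y, hy, hny⟩; exact ⟨h, y, hy, fun hs => hny ((ih y).mpr hs)⟩
      · rintro ⟨h, y, hy, hny⟩; exact ⟨h, y, hy, fun hs => hny ((ih y).mp hs)⟩

/-- **Faithfulness of the actual obligation case** (case ○ₐφ of Lemma 3), and
the analogous case ○ₚφ: in the interpretation induced by a CJ model,
`⌊○ₐφ⌋ s` holds iff `V(φ) ∈ ob(av(s))` and `av(s) ∩ V(¬φ) ≠ ∅`, i.e., iff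
`M,s ⊨ ○ₐφ`; similarly for ○ₚ with `pv` in place of `av`. -/
theorem obl_cases {S : Type} (M : CJModel S) (φ : CJForm) (s : S) :
    (M.emb (.oblA φ) s ↔
      ({t | M.sat φ t} ∈ M.ob (M.av s) ∧ (M.av s ∩ {t | ¬ M.sat φ t}).Nonempty)) ∧
    (M.emb (.oblA φ) s ↔ M.sat (.oblA φ) s) ∧
    (M.emb (.oblP φ) s ↔
      ({t | M.sat φ t} ∈ M.ob (M.pv s) ∧ (M.pv s ∩ {t | ¬ M.sat φ t}).Nonempty)) ∧
    (M.emb (.oblP φ) s ↔ M.sat (.oblP φ) s) := by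
  have ha := emb_eq_sat M (.oblA φ) s
  have hp := emb_eq_sat M (.oblP φ) s
  exact ⟨ha.trans (Iff.rfl), ha, hp.trans (Iff.rfl), hp⟩
end

section
/- Faithfulness of the alethic modality cases (cases □φ, □ₐφ, □ₚφ of Lemma 3): Let M = ⟨S, av, pv, ob, V⟩ be a CJ model with the induced interpretation of the embedding over S. Then for every CJ formula φ and every world s ∈ S: (i) ⌊□φ⌋ s holds iff V(φ) = S, i.e., iff M,s ⊨ □φ; (ii) ⌊□ₐφ⌋ s holds iff av(s) ⊆ V(φ), i.e., iff M,s ⊨ □ₐφ; (iii) ⌊□ₚφ⌋ s holds iff pv(s) ⊆ V(φ), i.e., iff M,s ⊨ □ₚφ. -/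
lemma emb_iff_sat {S : Type} (M : CJModel S) : ∀ (φ : CJForm) (s : S),
    M.emb φ s ↔ M.sat φ s := by
  intro φ
  induction φ with
  | atom n => intro s; rfl
  | neg φ ih => intro s; exact not_congr (ih s)
  | disj φ ψ ih1 ih2 => intro s; exact or_congr (ih1 s) (ih2 s)
  | box φ ih =>
      intro s
      show (∀ y, M.emb φ y) ↔ _
      constructor
      · intro h; ext t; simp [(ih t).symm, h t]
      · intro h y; exact (ih y).mpr (Set.eq_univ_iff_forall.mp h y)
  | boxa φ ih =>
      intro s
      show (∀ y, M.avR s y → M.emb φ y) ↔ _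
      exact ⟨fun h t ht => (ih t).mp (h t ht), fun h y hy => (ih y).mpr (h hy)⟩
  | boxp φ ih =>
      intro s
      show (∀ y, M.pvR s y → M.emb φ y) ↔ _
      exact ⟨fun h t ht => (ih t).mp (h t ht), fun h y hy => (ih y).mpr (h hy)⟩
  | cond φ ψ ih1 ih2 =>
      intro s
      show M.obR (M.emb φ) (M.emb ψ) ↔ _
      have h1 : {t | M.emb φ t} = {t | M.sat φ t} := by ext t; exact ih1 t
      have h2 : {t | M.emb ψ t} = {t | M.sat ψ t} := by ext t; exact ih2 t
      unfold CJModel.obR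
      rw [h1, h2]
      exact Iff.rfl
  | oblA φ ih =>
      intro s
      show M.obR (M.avR s) (M.emb φ) ∧ (∃ y, M.avR s y ∧ ¬ M.emb φ y) ↔ _
      have h2 : {t | M.emb φ t} = {t | M.sat φ t} := by ext t; exact ih t
      unfold CJModel.obR
      rw [h2]
      have : {t | M.avR s t} = M.av s := rfl
      rw [this]
      exact and_congr Iff.rfl ⟨fun ⟨y, hy, hn⟩ => ⟨y, hy, fun h => hn ((ih y).mpr h)⟩,
        fun ⟨y, hy, hn⟩ => ⟨y, hy, fun h => hn ((ih y).mp h)⟩⟩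
  | oblP φ ih =>
      intro s
      show M.obR (M.pvR s) (M.emb φ) ∧ (∃ y, M.pvR s y ∧ ¬ M.emb φ y) ↔ _
      have h2 : {t | M.emb φ t} = {t | M.sat φ t} := by ext t; exact ih t
      unfold CJModel.obR
      rw [h2]
      have : {t | M.pvR s t} = M.pv s := rfl
      rw [this]
      exact and_congr Iff.rfl ⟨fun ⟨y, hy, hn⟩ => ⟨y, hy, fun h => hn ((ih y).mpr h)⟩,
        fun ⟨y, hy, hn⟩ => ⟨y, hy, fun h => hn ((ih y).mp h)⟩⟩

/-- **Faithfulness of the alethic modality cases** (cases □φ, □ₐφ, □ₚφ of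
Lemma 3) in the interpretation induced by a CJ model. -/
theorem box_cases {S : Type} (M : CJModel S) (φ : CJForm) (s : S) :
    (M.emb (.box φ) s ↔ {t | M.sat φ t} = (Set.univ : Set S)) ∧
    (M.emb (.box φ) s ↔ M.sat (.box φ) s) ∧
    (M.emb (.boxa φ) s ↔ M.av s ⊆ {t | M.sat φ t}) ∧
    (M.emb (.boxa φ) s ↔ M.sat (.boxa φ) s) ∧
    (M.emb (.boxp φ) s ↔ M.pv s ⊆ {t | M.sat φ t}) ∧
    (M.emb (.boxp φ) s ↔ M.sat (.boxp φ) s) := by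
  refine ⟨emb_iff_sat M (.box φ) s, emb_iff_sat M (.box φ) s,
    (emb_iff_sat M (.boxa φ) s).trans ?_, emb_iff_sat M (.boxa φ) s,
    (emb_iff_sat M (.boxp φ) s).trans ?_, emb_iff_sat M (.boxp φ) s⟩ <;> exact Iff.rfl
end
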